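/- Let (X,ℬ,m,T) be an invertible, conservative, ergodic, measure-preserving transformation with m(X)=∞. Then T is two-sided boundedly rationally ergodic if and only if T is (one-sided) boundedly rationally ergodic. -/

import Mathlib

open MeasureTheory Filter Set
open scoped ENNReal Topology

noncomputable section

/-- One-sided Birkhoff sum `S_n(f)(x) = ∑_{k=0}^{n-1} f (T^k x)`. -/
def birkhoffS {X : Type*} (T : X → X) (f : X → ℝ) (n : ℕ) (x : X) : ℝ :=
  ∑ k ∈ Finset.range n, f (T^[k] x)

/-- Symmetric Birkhoff sum `Σ_n(f)(x) = ∑_{|k|<n} f (T^k x)`, where `T'` is the inverse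
of the invertible transformation `T`. -/
def birkhoffSym {X : Type*} (T T' : X → X) (f : X → ℝ) (n : ℕ) (x : X) : ℝ :=
  ∑ k ∈ Finset.range n, f (T^[k] x) + ∑ k ∈ Finset.Icc 1 (n - 1), f (T'^[k] x)

/-- The return sequence `a_n(A) = (1/m(A)²) ∑_{k=0}^{n-1} m (A ∩ T^{-k} A)`. -/
def aSeq {X : Type*} [MeasurableSpace X] (T : X → X) (m : MeasureTheory.Measure X)
    (A : Set X) (n : ℕ) : ℝ :=
  (∑ k ∈ Finset.range n, (m (A ∩ (T^[k]) ⁻¹' A)).toReal) / (m A).toReal ^ 2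

/-- The two-sided return sequence `ā_n(A) = (1/m(A)²) ∑_{|k|≤n} m (A ∩ T^k A)`,
where `T'` is the inverse of `T` (so that `T^k A = (T'^k)⁻¹ A` for `k ≥ 0`). -/
def aSeqSym {X : Type*} [MeasurableSpace X] (T T' : X → X) (m : MeasureTheory.Measure X)
    (A : Set X) (n : ℕ) : ℝ :=
  ((m A).toReal + ∑ k ∈ Finset.Icc 1 n,
      ((m (A ∩ (T'^[k]) ⁻¹' A)).toReal + (m (A ∩ (T^[k]) ⁻¹' A)).toReal)) /
    (m A).toReal ^ 2

/-- `T` is boundedly rationally ergodic (BRE): there are `A` of positive finite measure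
and `M < ∞` with `S_n(1_A) ≤ M a_n(A)` a.e. on `A` for all `n ≥ 1`. -/
def BddRatErg {X : Type*} [MeasurableSpace X] (T : X → X)
    (m : MeasureTheory.Measure X) : Prop :=
  ∃ A : Set X, MeasurableSet A ∧ 0 < m A ∧ m A < ⊤ ∧
    ∃ M : ℝ, ∀ n : ℕ, 1 ≤ n →
      ∀ᵐ x ∂(m.restrict A), birkhoffS T (A.indicator 1) n x ≤ M * aSeq T m A n

/-- `T` is two-sided boundedly rationally ergodic: there are `A` of positive finite measure
and `M < ∞` with `Σ_n(1_A) ≤ M ā_n(A)` a.e. on `A` for all `n ≥ 1`. -/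
def TwoSidedBRE {X : Type*} [MeasurableSpace X] (T T' : X → X)
    (m : MeasureTheory.Measure X) : Prop :=
  ∃ A : Set X, MeasurableSet A ∧ 0 < m A ∧ m A < ⊤ ∧
    ∃ M : ℝ, ∀ n : ℕ, 1 ≤ n →
      ∀ᵐ x ∂(m.restrict A), birkhoffSym T T' (A.indicator 1) n x ≤ M * aSeqSym T T' m A n

/-- `tailSup g n = sup_{N ≥ n} g N`. -/
def tailSup (g : ℕ → ℝ) (n : ℕ) : ℝ := sSup (g '' Set.Ici n)

/-! Write `S'_n` for the Birkhoff sums of `T⁻¹`. Then `Σ_n(1_A) = S_n(1_A) + S'_n(1_A) - 1_A`,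
and since `T` preserves `m`, `m(A ∩ T^k A) = m(A ∩ T^{-k} A)`, so `ā_n = 2 a_{n+1} - a_1` lies
between `a_n` and `3 a_n`. Two-sided BRE therefore gives BRE through `S_n ≤ Σ_n`. Conversely,
for `x ∈ A` let `j < n` be the last time with `T^{-j} x ∈ A`: the backward sum `S'_n(1_A)(x)` is
the forward sum `S_{j+1}(1_A)(T^{-j} x) ≤ M a_{j+1} ≤ M a_n`, where the BRE bound holds at
`T^{-j} x` for a.e. `x` because `T^{-j}` preserves `m`. -/

open Finset Function

theorem Finset.sum_range_succ_eq_add_sum_Icc {M : Type*} [AddCommMonoid M] (f : ℕ → M)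
    (n : ℕ) : ∑ k ∈ range (n + 1), f k = f 0 + ∑ k ∈ Icc 1 n, f k := by
  rw [sum_range_eq_add_Ico f (by omega : 0 < n + 1), Ico_add_one_right_eq_Icc]

section BirkhoffSums

variable {X : Type*} {T T' : X → X}

theorem birkhoffSym_add_eq_birkhoffS_add_birkhoffS (f : X → ℝ) {n : ℕ} (hn : 1 ≤ n) (x : X) :
    birkhoffSym T T' f n x + f x = birkhoffS T f n x + birkhoffS T' f n x := by
  obtain ⟨p, rfl⟩ : ∃ p, n = p + 1 := ⟨n - 1, by omega⟩
  rw [birkhoffSym, birkhoffS, birkhoffS, sum_range_succ_eq_add_sum_Icc (fun k ↦ f (T'^[k] x)),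
    Nat.add_sub_cancel, iterate_zero_apply]
  ring

theorem birkhoffS_le_birkhoffSym {f : X → ℝ} (hf : 0 ≤ f) (n : ℕ) (x : X) :
    birkhoffS T f n x ≤ birkhoffSym T T' f n x :=
  le_add_of_nonneg_right (sum_nonneg fun _ _ ↦ hf _)

theorem birkhoffS_iterate_of_rightInverse (h : RightInverse T' T) (f : X → ℝ) (j : ℕ) (x : X) :
    birkhoffS T f (j + 1) (T'^[j] x) = birkhoffS T' f (j + 1) x := by
  rw [birkhoffS, birkhoffS, ← sum_range_reflect]
  refine sum_congr rfl fun k hk ↦ ?_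
  obtain ⟨i, rfl⟩ : ∃ i, j = k + i := ⟨j - k, by simp only [Finset.mem_range] at hk; omega⟩
  rw [show k + i + 1 - 1 - k = i by omega, add_comm, iterate_add_apply, h.iterate i]

theorem exists_lastVisit_birkhoffS_indicator_eq (g : X → X) {A : Set X} {x : X} (hx : x ∈ A)
    {n : ℕ} (hn : 1 ≤ n) :
    ∃ j < n, g^[j] x ∈ A ∧
      birkhoffS g (A.indicator 1) n x = birkhoffS g (A.indicator 1) (j + 1) x := by
  classical
  set j := Nat.findGreatest (fun k ↦ g^[k] x ∈ A) (n - 1)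
  have hjn : j < n := (Nat.findGreatest_le _).trans_lt (by omega)
  refine ⟨j, hjn, Nat.findGreatest_spec (P := fun k ↦ g^[k] x ∈ A) (Nat.zero_le _) hx, ?_⟩
  refine (sum_subset (range_subset_range.2 hjn) fun k hkn hkj ↦ ?_).symm
  simp only [Finset.mem_range, not_lt] at hkn hkj
  exact indicator_of_notMem (Nat.findGreatest_is_greatest hkj (by omega)) 1

end BirkhoffSums

section ReturnSequences

variable {X : Type*} [MeasurableSpace X] {m : Measure X} {T T' : X → X} {A : Set X}

theorem aSeq_nonneg (n : ℕ) : 0 ≤ aSeq T m A n := by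
  unfold aSeq
  positivity

theorem aSeq_mono : Monotone (aSeq T m A) := fun _ _ hij ↦
  div_le_div_of_nonneg_right (sum_le_sum_of_subset_of_nonneg (range_subset_range.2 hij)
    fun _ _ _ ↦ ENNReal.toReal_nonneg) (by positivity)

theorem aSeq_succ_le (hA : m A ≠ ∞) (n : ℕ) :
    aSeq T m A (n + 1) ≤ aSeq T m A n + aSeq T m A 1 := by
  rw [aSeq, aSeq, aSeq, sum_range_succ, sum_range_one, ← add_div, iterate_zero, preimage_id,
    inter_self]
  exact div_le_div_of_nonneg_right
    (add_le_add_right (ENNReal.toReal_mono hA (measure_mono inter_subset_left)) _) (by positivity)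

theorem measure_inter_preimage_of_leftInverse {f g : X → X} (hf : MeasurePreserving f m m)
    (hg : Measurable g) (hgf : LeftInverse g f) (hA : MeasurableSet A) :
    m (A ∩ g ⁻¹' A) = m (A ∩ f ⁻¹' A) := calc
  m (A ∩ g ⁻¹' A) = m (f ⁻¹' (A ∩ g ⁻¹' A)) :=
    (hf.measure_preimage (hA.inter (hg hA)).nullMeasurableSet).symm
  _ = m (A ∩ f ⁻¹' A) := by
    congr 1
    ext x
    simp [hgf x, and_comm]

theorem aSeqSym_eq (hm : MeasurePreserving T m m) (hT' : Measurable T')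
    (hinv : LeftInverse T' T) (hA : MeasurableSet A) (n : ℕ) :
    aSeqSym T T' m A n = 2 * aSeq T m A (n + 1) - aSeq T m A 1 := by
  have hsymm (k : ℕ) : m (A ∩ T'^[k] ⁻¹' A) = m (A ∩ T^[k] ⁻¹' A) :=
    measure_inter_preimage_of_leftInverse (hm.iterate k) (hT'.iterate k) (hinv.iterate k) hA
  rw [aSeqSym, aSeq, aSeq, sum_range_one, sum_range_succ_eq_add_sum_Icc]
  simp only [hsymm, sum_add_distrib, iterate_zero, preimage_id, inter_self]
  ring

theorem aSeq_le_aSeqSym (hm : MeasurePreserving T m m) (hT' : Measurable T')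
    (hinv : LeftInverse T' T) (hA : MeasurableSet A) (n : ℕ) :
    aSeq T m A n ≤ aSeqSym T T' m A n := by
  rw [aSeqSym_eq hm hT' hinv hA]
  linarith [aSeq_mono (T := T) (m := m) (A := A) n.le_succ,
    aSeq_mono (T := T) (m := m) (A := A) (Nat.le_add_left 1 n)]

theorem aSeqSym_le_three_mul (hm : MeasurePreserving T m m) (hT' : Measurable T')
    (hinv : LeftInverse T' T) (hA : MeasurableSet A) (hAfin : m A ≠ ∞) {n : ℕ} (hn : 1 ≤ n) :
    aSeqSym T T' m A n ≤ 3 * aSeq T m A n := by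
  rw [aSeqSym_eq hm hT' hinv hA]
  linarith [aSeq_succ_le (T := T) hAfin n, aSeq_mono (T := T) (m := m) (A := A) hn]

end ReturnSequences

section BoundedRationalErgodicity

variable {X : Type*} [MeasurableSpace X] {m : Measure X} {T T' : X → X} {A : Set X}

theorem TwoSidedBRE.bddRatErg (hm : MeasurePreserving T m m) (hT' : Measurable T')
    (hinv : LeftInverse T' T) (h : TwoSidedBRE T T' m) : BddRatErg T m := by
  obtain ⟨A, hA, hApos, hAfin, M, hM⟩ := h
  refine ⟨A, hA, hApos, hAfin, 3 * max M 0, fun n hn ↦ ?_⟩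
  filter_upwards [hM n hn] with x hx
  have hsym_nonneg : 0 ≤ aSeqSym T T' m A n :=
    (aSeq_nonneg n).trans (aSeq_le_aSeqSym hm hT' hinv hA n)
  calc birkhoffS T (A.indicator 1) n x
      ≤ birkhoffSym T T' (A.indicator 1) n x :=
        birkhoffS_le_birkhoffSym (indicator_nonneg fun _ _ ↦ zero_le_one) n x
    _ ≤ M * aSeqSym T T' m A n := hx
    _ ≤ max M 0 * aSeqSym T T' m A n := by gcongr; exact le_max_left M 0
    _ ≤ max M 0 * (3 * aSeq T m A n) :=
        mul_le_mul_of_nonneg_left (aSeqSym_le_three_mul hm hT' hinv hA hAfin.ne hn)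
          (le_max_right M 0)
    _ = 3 * max M 0 * aSeq T m A n := by ring

theorem ae_birkhoffS_inv_indicator_le (hm' : MeasurePreserving T' m m) (hinv : RightInverse T' T)
    (hA : MeasurableSet A) {M : ℝ} (hM0 : 0 ≤ M)
    (hM : ∀ᵐ y ∂m.restrict A, ∀ n, 1 ≤ n → birkhoffS T (A.indicator 1) n y ≤ M * aSeq T m A n) :
    ∀ᵐ x ∂m.restrict A, ∀ n, 1 ≤ n → birkhoffS T' (A.indicator 1) n x ≤ M * aSeq T m A n := by
  have hvisits : ∀ᵐ x ∂m, ∀ j, T'^[j] x ∈ A → ∀ n, 1 ≤ n →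
      birkhoffS T (A.indicator 1) n (T'^[j] x) ≤ M * aSeq T m A n :=
    ae_all_iff.2 fun j ↦ (hm'.iterate j).quasiMeasurePreserving.ae ((ae_restrict_iff' hA).1 hM)
  filter_upwards [ae_restrict_of_ae hvisits, ae_restrict_mem hA] with x hx hxA n hn
  obtain ⟨j, hjn, hjA, hlast⟩ := exists_lastVisit_birkhoffS_indicator_eq T' hxA hn
  calc birkhoffS T' (A.indicator 1) n x
      = birkhoffS T (A.indicator 1) (j + 1) (T'^[j] x) := by
        rw [hlast, birkhoffS_iterate_of_rightInverse hinv]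
    _ ≤ M * aSeq T m A (j + 1) := hx j hjA (j + 1) (Nat.le_add_left 1 j)
    _ ≤ M * aSeq T m A n := by gcongr; exact aSeq_mono hjn

theorem BddRatErg.twoSidedBRE (hm : MeasurePreserving T m m) (hT' : Measurable T')
    (hinv₁ : LeftInverse T' T) (hinv₂ : RightInverse T' T) (h : BddRatErg T m) :
    TwoSidedBRE T T' m := by
  obtain ⟨A, hA, hApos, hAfin, M, hM⟩ := h
  have hM' : ∀ᵐ y ∂m.restrict A, ∀ n, 1 ≤ n →
      birkhoffS T (A.indicator 1) n y ≤ max M 0 * aSeq T m A n :=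
    ae_all_iff.2 fun n ↦ eventually_imp_distrib_left.2 fun hn ↦ (hM n hn).mono fun _ hy ↦
      hy.trans (mul_le_mul_of_nonneg_right (le_max_left M 0) (aSeq_nonneg n))
  let e : X ≃ᵐ X := ⟨⟨T, T', hinv₁, hinv₂⟩, hm.measurable, hT'⟩
  have hm' : MeasurePreserving T' m m := (show MeasurePreserving e m m from hm).symm
  refine ⟨A, hA, hApos, hAfin, 2 * max M 0, fun n hn ↦ ?_⟩
  filter_upwards [hM', ae_birkhoffS_inv_indicator_le hm' hinv₂ hA (le_max_right M 0) hM',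
    ae_restrict_mem hA] with x hfwd hbwd hxA
  have hsplit :=
    birkhoffSym_add_eq_birkhoffS_add_birkhoffS (T := T) (T' := T') (A.indicator 1) hn x
  have hx1 : A.indicator (1 : X → ℝ) x = 1 := indicator_of_mem hxA 1
  have hle := mul_le_mul_of_nonneg_left (aSeq_le_aSeqSym hm hT' hinv₁ hA n) (le_max_right M 0)
  linarith [hfwd n hn, hbwd n hn]

end BoundedRationalErgodicity

theorem twoSidedBRE_iff_BRE_general
    {X : Type*} [MeasurableSpace X] (m : Measure X)
    (T T' : X → X) (hT'meas : Measurable T')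
    (hinv₁ : Function.LeftInverse T' T) (hinv₂ : Function.RightInverse T' T)
    (hT : Ergodic T m) :
    TwoSidedBRE T T' m ↔ BddRatErg T m :=
  ⟨fun h ↦ h.bddRatErg hT.toMeasurePreserving hT'meas hinv₁,
    fun h ↦ h.twoSidedBRE hT.toMeasurePreserving hT'meas hinv₁ hinv₂⟩

/-- For an invertible, conservative, ergodic, measure-preserving transformation of an
infinite σ-finite measure space, two-sided bounded rational ergodicity is equivalent to
(one-sided) bounded rational ergodicity. -/
theorem twoSidedBRE_iff_BRE
    {X : Type*} [MeasurableSpace X] (m : Measure X) [SigmaFinite m]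
    (T T' : X → X) (hT'meas : Measurable T')
    (hinv₁ : Function.LeftInverse T' T) (hinv₂ : Function.RightInverse T' T)
    (hT : Ergodic T m) (hcons : Conservative T m) (hXinf : m Set.univ = ⊤) :
    TwoSidedBRE T T' m ↔ BddRatErg T m :=
  twoSidedBRE_iff_BRE_general m T T' hT'meas hinv₁ hinv₂ hT
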